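/- For all integers k ≥ 1 and all Motzkin paths π_1 and π_2, one has τ_k(U π_1 D π_2) = C(0,k−1) + C(1,k−1) + τ_{k−2}(π_1) + 2·τ_{k−1}(π_1) + τ_k(π_1) + τ_k(π_2), where U π_1 D π_2 denotes the Motzkin path consisting of an up step, followed by π_1 raised one level, followed by a down step, followed by π_2, and where by convention τ_j ≡ 0 for j ≤ 0. -/

import Mathlib

/-- A step of a lattice path: up `(1,1)`, down `(1,-1)`, or level `(1,0)`. -/
inductive Step : Type
  | U : Step
  | D : Step
  | L : Step
deriving DecidableEq

/-- The vertical displacement of a step. -/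
def stepVal : Step → ℤ
  | Step.U => 1
  | Step.D => -1
  | Step.L => 0

/-- A list of steps is a Motzkin path: it ends at height `0` and never goes below
the x-axis. -/
def IsMotzkin (p : List Step) : Prop :=
  ((p.map stepVal).sum = 0) ∧ ∀ i : ℕ, 0 ≤ ((p.take i).map stepVal).sum

/-- The height of the `i`-th step of `p` (the y-coordinate of its left endpoint). -/
def htN (p : List Step) (i : ℕ) : ℕ := (((p.take i).map stepVal).sum).toNat

/-- The statistic `τ_k` on Motzkin paths:
`τ_k(π) = Σ_s C(2·ht(s), k-1) + Σ_t C(2·ht(t)-1, k-1)`, where `s` ranges over up and level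
steps and `t` over down steps; by convention `τ_k = 0` for `k ≤ 0`. -/
def tauM (p : List Step) (k : ℤ) : ℕ :=
  if k ≤ 0 then 0
  else ∑ i : Fin p.length,
    if p.get i = Step.D then Nat.choose (2 * htN p (i : ℕ) - 1) (k.toNat - 1)
    else Nat.choose (2 * htN p (i : ℕ)) (k.toNat - 1)

/-- Binomial coefficient `C(a, b)` with an integer lower index, equal to `0` when `b < 0`. -/
def chooseZ (a : ℕ) (b : ℤ) : ℕ := if b < 0 then 0 else a.choose b.toNat

/-!
A step at height `h` contributes `C(x, k-1)` to `τ_k`, where `x = 2h` or `2h - 1`. Since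
`chooseZ` vanishes at a negative lower index, this reads the same for every integer `k`,
including the convention `τ_j = 0` for `j ≤ 0`. In `U π₁ D π₂` the outer steps give
`C(0, k-1)` and `C(1, k-1)`, `π₂` keeps its heights, and every step of `π₁` is raised by one,
turning `x` into `x + 2`; applying Pascal's rule twice,
`C(x+2, k-1) = C(x, k-3) + 2 C(x, k-2) + C(x, k-1)`. Raising a down step is harmless because
in a Motzkin path it has height at least one.
-/

theorem chooseZ_succ (x : ℕ) (b : ℤ) :
    chooseZ (x + 1) b = chooseZ x (b - 1) + chooseZ x b := by
  unfold chooseZ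
  rcases lt_trichotomy b 0 with hb | rfl | hb
  · simp [hb, show b - 1 < 0 by omega]
  · simp
  · obtain ⟨n, rfl⟩ : ∃ n : ℕ, b = n + 1 := ⟨b.toNat - 1, by omega⟩
    simp only [show ¬ (n + 1 : ℤ) < 0 by omega, show ¬ (n : ℤ) < 0 by omega, if_false,
      add_sub_cancel_right, Int.toNat_natCast, show (n + 1 : ℤ).toNat = n + 1 by omega,
      Nat.choose_succ_succ']

theorem chooseZ_add_two (x : ℕ) (b : ℤ) :
    chooseZ (x + 2) b = chooseZ x (b - 2) + 2 * chooseZ x (b - 1) + chooseZ x b := by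
  rw [chooseZ_succ, chooseZ_succ, chooseZ_succ, sub_sub, one_add_one_eq_two]
  ring

def binomTop (s : Step) (h : ℤ) : ℕ := (2 * h - if s = Step.D then 1 else 0).toNat

/-- `τ_{b+1}` of a path started at height `h`, computed step by step. -/
def tauFrom (b : ℤ) : ℤ → List Step → ℕ
  | _, [] => 0
  | h, s :: p => chooseZ (binomTop s h) b + tauFrom b (h + stepVal s) p

theorem tauFrom_append (b h : ℤ) (p q : List Step) :
    tauFrom b h (p ++ q) = tauFrom b h p + tauFrom b (h + (p.map stepVal).sum) q := by
  induction p generalizing h with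
  | nil => simp [tauFrom]
  | cons s p ih => simp only [List.cons_append, tauFrom, ih, List.map_cons, List.sum_cons,
      add_assoc]

theorem sum_binomTop_eq_tauFrom (b h : ℤ) (p : List Step) :
    ∑ i : Fin p.length, chooseZ (binomTop p[i] (h + ((p.take i).map stepVal).sum)) b =
      tauFrom b h p := by
  induction p generalizing h with
  | nil => simp [tauFrom]
  | cons s p ih =>
    rw [tauFrom, ← ih]
    exact (Fin.sum_univ_succ (n := p.length) _).trans (by simp [add_assoc])

theorem tauM_eq_tauFrom (p : List Step) (k : ℤ) : tauM p k = tauFrom (k - 1) 0 p := by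
  rw [← sum_binomTop_eq_tauFrom, tauM]
  split_ifs with hk
  · simp [chooseZ, show k - 1 < 0 by omega]
  · refine Finset.sum_congr rfl fun i _ => ?_
    simp only [chooseZ, binomTop, htN, List.get_eq_getElem, Fin.getElem_fin, zero_add,
      show ¬ k - 1 < 0 by omega, if_false, show (k - 1).toNat = k.toNat - 1 by omega]
    split_ifs <;> congr 1 <;> omega

theorem tauFrom_add_one (b h : ℤ) (p : List Step)
    (hp : ∀ i, 0 ≤ h + ((p.take i).map stepVal).sum) :
    tauFrom b (h + 1) p = tauFrom (b - 2) h p + 2 * tauFrom (b - 1) h p + tauFrom b h p := by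
  induction p generalizing h with
  | nil => simp [tauFrom]
  | cons s p ih =>
    have hh : 0 ≤ h := by simpa using hp 0
    have hs : 0 ≤ h + stepVal s := by simpa using hp 1
    have htop : binomTop s (h + 1) = binomTop s h + 2 := by
      cases s <;> simp [binomTop, stepVal] at hs ⊢ <;> omega
    have htail : ∀ i, 0 ≤ h + stepVal s + ((p.take i).map stepVal).sum := fun i => by
      simpa [add_assoc] using hp (i + 1)
    simp only [tauFrom, htop, chooseZ_add_two, add_right_comm h 1, ih _ htail]
    ring

theorem stmt2_general (k : ℤ) (p q : List Step)
    (hp : IsMotzkin p) :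
    tauM (Step.U :: p ++ [Step.D] ++ q) k =
      chooseZ 0 (k - 1) + chooseZ 1 (k - 1) + tauM p (k - 2) + 2 * tauM p (k - 1) +
        tauM p k + tauM q k := by
  have hlift : tauFrom (k - 1) 1 p =
      tauFrom (k - 3) 0 p + 2 * tauFrom (k - 2) 0 p + tauFrom (k - 1) 0 p := by
    rw [show k - 3 = k - 1 - 2 by ring, show k - 2 = k - 1 - 1 by ring]
    simpa using tauFrom_add_one (k - 1) 0 p (by simpa using hp.2)
  simp only [tauM_eq_tauFrom, List.cons_append, List.append_assoc, tauFrom, tauFrom_append,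
    hp.1, show k - 2 - 1 = k - 3 by ring, show k - 1 - 1 = k - 2 by ring]
  simp [binomTop, stepVal, hlift]
  ring

/-- for `k ≥ 1` and Motzkin paths `π₁, π₂`,
`τ_k(U π₁ D π₂) = C(0,k-1) + C(1,k-1) + τ_{k-2}(π₁) + 2·τ_{k-1}(π₁) + τ_k(π₁) + τ_k(π₂)`. -/
theorem stmt2 (k : ℤ) (hk : 1 ≤ k) (p q : List Step)
    (hp : IsMotzkin p) (hq : IsMotzkin q) :
    tauM (Step.U :: p ++ [Step.D] ++ q) k =
      chooseZ 0 (k - 1) + chooseZ 1 (k - 1) + tauM p (k - 2) + 2 * tauM p (k - 1) +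
        tauM p k + tauM q k :=
  stmt2_general k p q hp
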